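/- arXiv:2512.17571 — 5 statements merged into one kernel-verified Lean document; each statement's English description precedes it below -/
import Mathlib

section
/- Let p, n ≥ 1, let B, D ∈ ℂ^{p×p} and L ∈ ℂ^{n×n}. For every eigenvalue μ of J = Iₙ ⊗ B − L ⊗ D there exist an eigenvalue λ of L and a nonzero vector v ∈ ℂ^{p} such that (B − μ·I_p) v = λ·D v; i.e., every eigenvalue of J solves the generalized eigenvalue problem (B − μI)v = λDv for some Laplacian eigenvalue λ. -/
/-!
Reshape an eigenvector of `J = Iₙ ⊗ B − L ⊗ D` into a nonzero `p × n` matrix `X` with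
`(B − μI) X = D X Lᵀ`. Since `X ≠ 0`, the map `u ↦ X u` does not vanish on some generalized
eigenspace of `Lᵀ`, say for `λ`; walking down a Jordan chain of `Lᵀ − λ` in that space we reach
a vector `u` with `X u ≠ 0` and `X Lᵀ u = λ X u`. Then `v = X u` solves `(B − μI) v = λ D v`,
and `λ`, an eigenvalue of `Lᵀ`, is one of `L`.
-/

open Matrix
open scoped Kronecker

/-- `μ` is an eigenvalue of the square complex matrix `M`. -/
def Matrix.IsEigenvalue {N : Type*} [Fintype N] (M : Matrix N N ℂ) (μ : ℂ) : Prop :=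
  ∃ v : N → ℂ, v ≠ 0 ∧ M.mulVec v = μ • v

namespace Module.End

theorem exists_apply_ne_zero_apply_eq_zero_of_pow_apply_eq_zero {R M N : Type*} [Semiring R]
    [AddCommMonoid M] [Module R M] [AddCommMonoid N] [Module R N]
    (T : Module.End R M) (g : M →ₗ[R] N) {k : ℕ} {u : M}
    (hk : (T ^ k) u = 0) (hu : g u ≠ 0) : ∃ x, g x ≠ 0 ∧ g (T x) = 0 := by
  induction k generalizing u with
  | zero =>
    rw [pow_zero, one_apply] at hk
    exact absurd (by rw [hk, map_zero]) hu
  | succ k ih =>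
    by_cases hTu : g (T u) = 0
    · exact ⟨u, hu, hTu⟩
    · exact ih (by rwa [pow_succ, mul_apply] at hk) hTu

theorem exists_eigenvector_and_apply_apply_eq_smul {K V W : Type*} [Field K] [IsAlgClosed K]
    [AddCommGroup V] [Module K V] [FiniteDimensional K V] [AddCommGroup W] [Module K W]
    (f : Module.End K V) (g : V →ₗ[K] W) (hg : g ≠ 0) :
    ∃ c : K, (∃ y, y ≠ 0 ∧ f y = c • y) ∧ ∃ x, g x ≠ 0 ∧ g (f x) = c • g x := by
  obtain ⟨c, hc⟩ : ∃ c, ¬ f.maxGenEigenspace c ≤ LinearMap.ker g := by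
    by_contra! h
    apply hg
    rw [← LinearMap.ker_eq_top, eq_top_iff, ← f.iSup_maxGenEigenspace_eq_top]
    exact iSup_le h
  obtain ⟨u, hu, hgu⟩ := SetLike.not_le_iff_exists.mp hc
  obtain ⟨k, hk⟩ := (f.mem_maxGenEigenspace c u).1 hu
  have hu0 : u ≠ 0 := by rintro rfl; exact hgu (Submodule.zero_mem _)
  -- for `g = id` the same descent along the chain ends at an eigenvector of `f`
  obtain ⟨y, hy0, hy⟩ :=
    exists_apply_ne_zero_apply_eq_zero_of_pow_apply_eq_zero _ LinearMap.id hk hu0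
  obtain ⟨x, hx0, hx⟩ := exists_apply_ne_zero_apply_eq_zero_of_pow_apply_eq_zero _ g hk hgu
  refine ⟨c, ⟨y, hy0, ?_⟩, x, hx0, ?_⟩
  · simpa [sub_eq_zero] using hy
  · simpa [sub_eq_zero] using hx

end Module.End

namespace Matrix

theorem isEigenvalue_of_vecMul_eq_smul {N : Type*} [Fintype N] [DecidableEq N]
    {M : Matrix N N ℂ} {c : ℂ} {u : N → ℂ} (hu : u ≠ 0) (h : u ᵥ* M = c • u) :
    M.IsEigenvalue c := by
  have hdet : (M - c • 1).det = 0 :=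
    exists_vecMul_eq_zero_iff.1 ⟨u, hu, by rw [vecMul_sub, vecMul_smul, vecMul_one, h, sub_self]⟩
  obtain ⟨v, hv0, hv⟩ := exists_mulVec_eq_zero_iff.2 hdet
  exact ⟨v, hv0, by rwa [sub_mulVec, smul_mulVec, one_mulVec, sub_eq_zero] at hv⟩

theorem one_kronecker_sub_kronecker_mulVec_vec {m n R : Type*} [Fintype m] [Fintype n]
    [DecidableEq n] [CommRing R] (B D : Matrix m m R) (L : Matrix n n R) (X : Matrix m n R) :
    ((1 : Matrix n n R) ⊗ₖ B - L ⊗ₖ D) *ᵥ vec X = vec (B * X - D * X * Lᵀ) := by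
  rw [sub_mulVec, kronecker_mulVec_vec, kronecker_mulVec_vec, transpose_one, Matrix.mul_one,
    vec_sub]

theorem isEigenvalue_one_kronecker_sub_kronecker_iff {m n : Type*} [Fintype m] [Fintype n]
    [DecidableEq m] [DecidableEq n] (B D : Matrix m m ℂ) (L : Matrix n n ℂ) (μ : ℂ) :
    ((1 : Matrix n n ℂ) ⊗ₖ B - L ⊗ₖ D).IsEigenvalue μ ↔
      ∃ X : Matrix m n ℂ, X ≠ 0 ∧ (B - μ • 1) * X = D * X * Lᵀ := by
  have key (X : Matrix m n ℂ) : ((1 : Matrix n n ℂ) ⊗ₖ B - L ⊗ₖ D) *ᵥ vec X = μ • vec X ↔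
      (B - μ • 1) * X = D * X * Lᵀ := by
    rw [one_kronecker_sub_kronecker_mulVec_vec, ← vec_smul, vec_inj, Matrix.sub_mul, Matrix.smul_mul,
      Matrix.one_mul]
    constructor <;> intro h <;> rw [← h, sub_sub_cancel]
  constructor
  · rintro ⟨w, hw0, hw⟩
    obtain ⟨X, rfl⟩ := vec_bijective.surjective w
    exact ⟨X, by rintro rfl; exact hw0 vec_zero, (key X).1 hw⟩
  · rintro ⟨X, hX0, hX⟩
    exact ⟨vec X, vec_eq_zero_iff.not.2 hX0, (key X).2 hX⟩

end Matrix

theorem eigenvalue_kronecker_generalized_general (p n : ℕ)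
    (B D : Matrix (Fin p) (Fin p) ℂ) (L : Matrix (Fin n) (Fin n) ℂ) (μ : ℂ)
    (hμ : ((1 : Matrix (Fin n) (Fin n) ℂ) ⊗ₖ B - L ⊗ₖ D).IsEigenvalue μ) :
    ∃ lam : ℂ, L.IsEigenvalue lam ∧
      ∃ v : Fin p → ℂ, v ≠ 0 ∧ (B - μ • (1 : Matrix (Fin p) (Fin p) ℂ)).mulVec v
        = lam • D.mulVec v := by
  obtain ⟨X, hX0, hX⟩ := (isEigenvalue_one_kronecker_sub_kronecker_iff B D L μ).1 hμ
  obtain ⟨c, ⟨y, hy0, hy⟩, x, hx0, hx⟩ :=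
    Module.End.exists_eigenvector_and_apply_apply_eq_smul (toLin' Lᵀ) (toLin' X)
      ((LinearEquiv.map_ne_zero_iff _).2 hX0)
  rw [toLin'_apply, mulVec_transpose] at hy
  simp only [toLin'_apply] at hx0 hx
  refine ⟨c, isEigenvalue_of_vecMul_eq_smul hy0 hy, X *ᵥ x, hx0, ?_⟩
  rw [mulVec_mulVec, hX, ← mulVec_mulVec, ← mulVec_mulVec, hx, mulVec_smul]

/-- Every eigenvalue `μ` of `J = Iₙ ⊗ B − L ⊗ D` solves the generalised eigenvalue problem
`(B − μI)v = λ·Dv` for some eigenvalue `λ` of `L` and some nonzero `v`. -/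
theorem eigenvalue_kronecker_generalized (p n : ℕ) (hp : 1 ≤ p) (hn : 1 ≤ n)
    (B D : Matrix (Fin p) (Fin p) ℂ) (L : Matrix (Fin n) (Fin n) ℂ) (μ : ℂ)
    (hμ : ((1 : Matrix (Fin n) (Fin n) ℂ) ⊗ₖ B - L ⊗ₖ D).IsEigenvalue μ) :
    ∃ lam : ℂ, L.IsEigenvalue lam ∧
      ∃ v : Fin p → ℂ, v ≠ 0 ∧ (B - μ • (1 : Matrix (Fin p) (Fin p) ℂ)).mulVec v
        = lam • D.mulVec v :=
  eigenvalue_kronecker_generalized_general p n B D L μ hμ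
end

section
/- Let p, n ≥ 1, B ∈ ℂ^{p×p}, v, w ∈ ℂ^{p} and D = v·wᵀ (a rank-one matrix). Assume the Kalman rank conditions rank([v, Bv, …, B^{p−1}v]) = p and rank([w, Bᵀw, …, (Bᵀ)^{p−1}w]) = p. Let L ∈ ℂ^{n×n} be a matrix having 0 as an eigenvalue (as holds for the in-degree Laplacian of any digraph), and set J = Iₙ ⊗ B − L ⊗ D. Then for every μ ∈ σ(J) \ σ(B) the scalar wᵀ(B − μ·I_p)^{−1}v is nonzero, and σ(L) = {0} ∪ { 1 / (wᵀ(B − μ·I_p)^{−1}v) : μ ∈ σ(J) \ σ(B) }. -/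
/-!
A block `z = (zᵢ)` is an eigenvector of `J = Iₙ ⊗ B − L ⊗ v wᵀ` for `μ ∉ σ(B)` exactly when
`(B − μ)zᵢ = (L a)ᵢ v` with `aᵢ = wᵀzᵢ`, i.e. `zᵢ = (L a)ᵢ (B − μ)⁻¹v`; pairing with `w` gives
`a = c · L a` for `c = wᵀ(B − μ)⁻¹v`, so `c ≠ 0` and `1/c ∈ σ(L)`. Conversely, for `λ ∈ σ(L) \ {0}`
with eigenvector `u`, any eigenpair `(μ, y)` of `B − λ v wᵀ` yields the eigenvector `u ⊗ y` of `J`.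
Observability forces `wᵀy ≠ 0` and then controllability (the Hautus test) forces `μ ∉ σ(B)`, after
which the same resolvent computation gives `λ c = 1`.
-/

open Matrix
open scoped Kronecker

namespace Matrix

section Kalman

variable {K : Type*} [Field K] {p : ℕ}

def kalmanMatrix (B : Matrix (Fin p) (Fin p) K) (v : Fin p → K) : Matrix (Fin p) (Fin p) K :=
  of fun i j : Fin p => ((B ^ (j : ℕ)) *ᵥ v) i

theorem mulVec_injective_of_rank_eq_card {n : Type*} [Fintype n] [DecidableEq n]
    {A : Matrix n n K} (h : A.rank = Fintype.card n) : Function.Injective A.mulVec := by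
  have hrange : LinearMap.range A.mulVecLin = ⊤ := by
    apply Submodule.eq_top_of_finrank_eq
    rw [← Matrix.rank, h, Module.finrank_fintype_fun_eq_card]
  exact LinearMap.injective_iff_surjective.mpr (LinearMap.range_eq_top.mp hrange)

theorem eq_zero_of_mulVec_eq_smul_of_dotProduct_eq_zero {B : Matrix (Fin p) (Fin p) K}
    {w y : Fin p → K} {μ : K} (hw : (kalmanMatrix Bᵀ w).rank = p) (hy : B *ᵥ y = μ • y)
    (hwy : w ⬝ᵥ y = 0) : y = 0 := by
  have hpow : ∀ k : ℕ, (B ^ k) *ᵥ y = μ ^ k • y := by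
    intro k
    induction k with
    | zero => simp
    | succ k ih => rw [pow_succ, ← mulVec_mulVec, hy, mulVec_smul, ih, smul_smul, pow_succ']
  have hinj : Function.Injective (kalmanMatrix Bᵀ w)ᵀ.mulVec :=
    mulVec_injective_of_rank_eq_card (by rwa [rank_transpose, Fintype.card_fin])
  refine hinj ?_
  rw [mulVec_zero]
  funext j
  have hcol : ((kalmanMatrix Bᵀ w)ᵀ *ᵥ y) j = (w ᵥ* B ^ (j : ℕ)) ⬝ᵥ y := by
    rw [← mulVec_transpose, transpose_pow]
    simp [mulVec, dotProduct, kalmanMatrix]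
  rw [hcol, ← dotProduct_mulVec, hpow, dotProduct_smul, hwy, smul_zero, Pi.zero_apply]

end Kalman

section Eigenvalue

variable {N : Type*} [Fintype N]

theorem exists_isEigenvalue [Nonempty N] (M : Matrix N N ℂ) : ∃ μ, M.IsEigenvalue μ := by
  obtain ⟨μ, hμ⟩ := Module.End.exists_eigenvalue M.mulVecLin
  obtain ⟨y, hy⟩ := hμ.exists_hasEigenvector
  exact ⟨μ, y, hy.right, hy.apply_eq_smul⟩

theorem ne_zero_and_isEigenvalue_one_div {L : Matrix N N ℂ} {a : N → ℂ} {c : ℂ} (ha : a ≠ 0)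
    (h : a = c • (L *ᵥ a)) : c ≠ 0 ∧ L.IsEigenvalue (1 / c) := by
  have hc : c ≠ 0 := fun hc => ha (by rw [h, hc, zero_smul])
  refine ⟨hc, a, ha, ?_⟩
  conv_rhs => rw [h, smul_smul, one_div, inv_mul_cancel₀ hc, one_smul]

variable [DecidableEq N]

theorem isEigenvalue_iff_det_sub_smul_one_eq_zero (M : Matrix N N ℂ) (μ : ℂ) :
    M.IsEigenvalue μ ↔ (M - μ • (1 : Matrix N N ℂ)).det = 0 := by
  rw [← exists_mulVec_eq_zero_iff]
  refine exists_congr fun x => and_congr_right fun _ => ?_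
  rw [sub_mulVec, smul_mulVec, one_mulVec, sub_eq_zero]

theorem isUnit_sub_smul_one_of_not_isEigenvalue {M : Matrix N N ℂ} {μ : ℂ}
    (h : ¬ M.IsEigenvalue μ) : IsUnit (M - μ • (1 : Matrix N N ℂ)) := by
  rw [isUnit_iff_isUnit_det, isUnit_iff_ne_zero]
  exact fun h0 => h ((isEigenvalue_iff_det_sub_smul_one_eq_zero M μ).mpr h0)

theorem isEigenvalue_transpose_iff {M : Matrix N N ℂ} {μ : ℂ} :
    Mᵀ.IsEigenvalue μ ↔ M.IsEigenvalue μ := by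
  rw [isEigenvalue_iff_det_sub_smul_one_eq_zero, isEigenvalue_iff_det_sub_smul_one_eq_zero,
    ← det_transpose, transpose_sub, transpose_smul, transpose_one, transpose_transpose]

end Eigenvalue

theorem eq_smul_inv_mulVec_of_mulVec_eq_smul {R m : Type*} [CommRing R] [Fintype m]
    [DecidableEq m] {A : Matrix m m R} (hA : IsUnit A) {y v : m → R} {s : R}
    (h : A *ᵥ y = s • v) : y = s • (A⁻¹ *ᵥ v) := by
  rw [← mulVec_smul, ← h, mulVec_mulVec, nonsing_inv_mul _ ((isUnit_iff_isUnit_det A).mp hA),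
    one_mulVec]

section Kronecker

variable {R : Type*} [CommSemiring R] {m ι : Type*} [Fintype m] [Fintype ι]

theorem kronecker_mulVec_apply (A : Matrix ι ι R) (M : Matrix m m R) (z : ι × m → R) (i : ι)
    (k : m) : (A ⊗ₖ M *ᵥ z) (i, k) = ∑ j, A i j * (M *ᵥ fun l => z (j, l)) k := by
  simp [mulVec, dotProduct, Fintype.sum_prod_type, Finset.mul_sum, mul_assoc]

theorem kronecker_mulVec_tensor (A : Matrix ι ι R) (M : Matrix m m R) (u : ι → R) (y : m → R) :
    A ⊗ₖ M *ᵥ (fun q => u q.1 * y q.2) = fun q => (A *ᵥ u) q.1 * (M *ᵥ y) q.2 := by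
  funext ⟨i, k⟩
  simp only [mulVec, dotProduct, Fintype.sum_prod_type, kronecker_apply, Finset.sum_mul_sum]
  exact Finset.sum_congr rfl fun j _ => Finset.sum_congr rfl fun l _ => by ring

end Kronecker

section NetworkJacobian

variable {R : Type*} [CommRing R] {ι m : Type*} [Fintype ι] [DecidableEq ι] [Fintype m]

def networkJacobian (L : Matrix ι ι R) (B : Matrix m m R) (v w : m → R) :
    Matrix (ι × m) (ι × m) R :=
  (1 : Matrix ι ι R) ⊗ₖ B - L ⊗ₖ vecMulVec v w

theorem sub_smul_vecMulVec_mulVec (B : Matrix m m R) (v w y : m → R) (c : R) :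
    (B - c • vecMulVec v w) *ᵥ y = B *ᵥ y - (c * (w ⬝ᵥ y)) • v := by
  rw [sub_mulVec, smul_mulVec, vecMulVec_mulVec, op_smul_eq_smul, smul_smul]

theorem networkJacobian_mulVec_apply (L : Matrix ι ι R) (B : Matrix m m R) (v w : m → R)
    (z : ι × m → R) (i : ι) (k : m) :
    (networkJacobian L B v w *ᵥ z) (i, k) =
      (B *ᵥ fun l => z (i, l)) k - (L *ᵥ fun j => w ⬝ᵥ fun l => z (j, l)) i * v k := by
  rw [networkJacobian, sub_mulVec, Pi.sub_apply, kronecker_mulVec_apply, kronecker_mulVec_apply]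
  congr 1
  · simp [one_apply]
  · simp only [vecMulVec_mulVec, op_smul_eq_smul, Pi.smul_apply, smul_eq_mul]
    simp only [mulVec, dotProduct, Finset.sum_mul, mul_assoc]

theorem networkJacobian_mulVec_tensor {L : Matrix ι ι R} {u : ι → R} {c : R}
    (hu : L *ᵥ u = c • u) (B : Matrix m m R) (v w y : m → R) :
    networkJacobian L B v w *ᵥ (fun q => u q.1 * y q.2) =
      fun q => u q.1 * ((B - c • vecMulVec v w) *ᵥ y) q.2 := by
  funext ⟨i, k⟩
  rw [networkJacobian, sub_mulVec, Pi.sub_apply, kronecker_mulVec_tensor,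
    kronecker_mulVec_tensor, one_mulVec, hu, sub_mulVec]
  simp only [Pi.sub_apply, Pi.smul_apply, smul_mulVec, smul_eq_mul]
  ring

end NetworkJacobian

section Spectrum

variable {ι m : Type*} [Fintype ι] [DecidableEq ι] [Fintype m] [DecidableEq m]

theorem exists_ne_zero_eq_smul_mulVec_of_isEigenvalue_networkJacobian {L : Matrix ι ι ℂ}
    {B : Matrix m m ℂ} {v w : m → ℂ} {μ : ℂ} (hJ : (networkJacobian L B v w).IsEigenvalue μ)
    (hB : ¬ B.IsEigenvalue μ) :
    ∃ a : ι → ℂ, a ≠ 0 ∧ a = (w ⬝ᵥ (B - μ • (1 : Matrix m m ℂ))⁻¹ *ᵥ v) • (L *ᵥ a) := by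
  obtain ⟨z, hz, hzJ⟩ := hJ
  set a : ι → ℂ := fun j => w ⬝ᵥ fun l => z (j, l)
  have hblock :
      ∀ i, (fun l => z (i, l)) = (L *ᵥ a) i • ((B - μ • (1 : Matrix m m ℂ))⁻¹ *ᵥ v) := by
    intro i
    refine eq_smul_inv_mulVec_of_mulVec_eq_smul (isUnit_sub_smul_one_of_not_isEigenvalue hB) ?_
    funext k
    have hik := congrFun hzJ (i, k)
    rw [networkJacobian_mulVec_apply] at hik
    simp only [sub_mulVec, smul_mulVec, one_mulVec, Pi.sub_apply, Pi.smul_apply,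
      smul_eq_mul] at hik ⊢
    linear_combination hik
  refine ⟨a, fun ha => hz ?_, ?_⟩
  · funext ⟨i, k⟩
    simpa [ha] using congrFun (hblock i) k
  · funext i
    change (w ⬝ᵥ fun l => z (i, l)) = _
    rw [hblock i, dotProduct_smul, smul_eq_mul, Pi.smul_apply, smul_eq_mul, mul_comm]

end Spectrum

section Controllable

variable {p : ℕ} {B : Matrix (Fin p) (Fin p) ℂ} {v w y : Fin p → ℂ} {c μ : ℂ}

theorem not_isEigenvalue_of_mulVec_sub_smul_eq_smul (hv : (kalmanMatrix B v).rank = p)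
    (hc : c ≠ 0) (hy : B *ᵥ y - c • v = μ • y) : ¬ B.IsEigenvalue μ := by
  intro hB
  obtain ⟨ξ, hξ, hBξ⟩ := isEigenvalue_transpose_iff.mpr hB
  have hpair : ξ ⬝ᵥ (B *ᵥ y - c • v) = ξ ⬝ᵥ (μ • y) := by rw [hy]
  have hBy : ξ ⬝ᵥ B *ᵥ y = μ * (ξ ⬝ᵥ y) := by
    rw [dotProduct_mulVec, ← mulVec_transpose, hBξ, smul_dotProduct, smul_eq_mul]
  rw [dotProduct_sub, hBy, dotProduct_smul, dotProduct_smul, smul_eq_mul, smul_eq_mul] at hpair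
  have hξv : v ⬝ᵥ ξ = 0 := by
    rw [dotProduct_comm]
    exact (mul_eq_zero.mp (by linear_combination -hpair)).resolve_left hc
  exact hξ (eq_zero_of_mulVec_eq_smul_of_dotProduct_eq_zero (by rwa [transpose_transpose]) hBξ hξv)

theorem exists_isEigenvalue_networkJacobian [NeZero p] {ι : Type*} [Fintype ι] [DecidableEq ι]
    (hv : (kalmanMatrix B v).rank = p) (hw : (kalmanMatrix Bᵀ w).rank = p) {L : Matrix ι ι ℂ}
    {lam : ℂ} (hlam : lam ≠ 0) (hL : L.IsEigenvalue lam) :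
    ∃ μ, (networkJacobian L B v w).IsEigenvalue μ ∧ ¬ B.IsEigenvalue μ ∧
      lam = 1 / (w ⬝ᵥ (B - μ • (1 : Matrix (Fin p) (Fin p) ℂ))⁻¹ *ᵥ v) := by
  obtain ⟨u, hu, hLu⟩ := hL
  obtain ⟨μ, y, hy, hμy⟩ := exists_isEigenvalue (B - lam • vecMulVec v w)
  rw [sub_smul_vecMulVec_mulVec] at hμy
  have hwy : w ⬝ᵥ y ≠ 0 := fun hwy => hy <|
    eq_zero_of_mulVec_eq_smul_of_dotProduct_eq_zero hw (by simpa [hwy] using hμy) hwy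
  have hB : ¬ B.IsEigenvalue μ :=
    not_isEigenvalue_of_mulVec_sub_smul_eq_smul hv (mul_ne_zero hlam hwy) hμy
  have hresolvent : (B - μ • (1 : Matrix (Fin p) (Fin p) ℂ)) *ᵥ y = (lam * (w ⬝ᵥ y)) • v := by
    rw [sub_mulVec, smul_mulVec, one_mulVec, ← hμy, sub_sub_cancel]
  have hy_eq := eq_smul_inv_mulVec_of_mulVec_eq_smul
    (isUnit_sub_smul_one_of_not_isEigenvalue hB) hresolvent
  have hlam_mul : lam * (w ⬝ᵥ (B - μ • (1 : Matrix (Fin p) (Fin p) ℂ))⁻¹ *ᵥ v) = 1 := by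
    have hwy_eq := congrArg (w ⬝ᵥ ·) hy_eq
    simp only [dotProduct_smul, smul_eq_mul] at hwy_eq
    exact mul_left_cancel₀ hwy (by linear_combination -hwy_eq)
  refine ⟨μ, ⟨fun q => u q.1 * y q.2, fun h0 => ?_, ?_⟩, hB, eq_one_div_of_mul_eq_one_left hlam_mul⟩
  · obtain ⟨i, hi⟩ := Function.ne_iff.mp hu
    obtain ⟨k, hk⟩ := Function.ne_iff.mp hy
    exact mul_ne_zero hi hk (congrFun h0 (i, k))
  · rw [networkJacobian_mulVec_tensor hLu, sub_smul_vecMulVec_mulVec, hμy]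
    funext q
    simp only [Pi.smul_apply, smul_eq_mul]
    ring

end Controllable

end Matrix

theorem laplacian_spectrum_from_jacobian_rank_one_general (p n : ℕ) (hp : 1 ≤ p)
    (B : Matrix (Fin p) (Fin p) ℂ) (v w : Fin p → ℂ)
    (hctrb : (Matrix.of fun i j : Fin p => ((B ^ (j : ℕ)).mulVec v) i).rank = p)
    (hobsv : (Matrix.of fun i j : Fin p => ((Bᵀ ^ (j : ℕ)).mulVec w) i).rank = p)
    (L : Matrix (Fin n) (Fin n) ℂ) (hL0 : L.IsEigenvalue 0) :
    (∀ μ : ℂ,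
        ((1 : Matrix (Fin n) (Fin n) ℂ) ⊗ₖ B - L ⊗ₖ Matrix.vecMulVec v w).IsEigenvalue μ →
        ¬ B.IsEigenvalue μ →
        w ⬝ᵥ (B - μ • (1 : Matrix (Fin p) (Fin p) ℂ))⁻¹.mulVec v ≠ 0) ∧
      {lam : ℂ | L.IsEigenvalue lam} =
        {0} ∪ {x : ℂ | ∃ μ : ℂ,
          ((1 : Matrix (Fin n) (Fin n) ℂ) ⊗ₖ B - L ⊗ₖ Matrix.vecMulVec v w).IsEigenvalue μ ∧
          ¬ B.IsEigenvalue μ ∧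
          x = 1 / (w ⬝ᵥ (B - μ • (1 : Matrix (Fin p) (Fin p) ℂ))⁻¹.mulVec v)} := by
  have : NeZero p := ⟨by omega⟩
  have of_jacobian : ∀ μ, (networkJacobian L B v w).IsEigenvalue μ → ¬ B.IsEigenvalue μ →
      w ⬝ᵥ (B - μ • (1 : Matrix (Fin p) (Fin p) ℂ))⁻¹ *ᵥ v ≠ 0 ∧
        L.IsEigenvalue (1 / (w ⬝ᵥ (B - μ • (1 : Matrix (Fin p) (Fin p) ℂ))⁻¹ *ᵥ v)) := by
    intro μ hJ hB
    obtain ⟨a, ha, h⟩ := exists_ne_zero_eq_smul_mulVec_of_isEigenvalue_networkJacobian hJ hB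
    exact ne_zero_and_isEigenvalue_one_div ha h
  refine ⟨fun μ hJ hB => (of_jacobian μ hJ hB).1, Set.ext fun lam => ⟨fun hL => ?_, ?_⟩⟩
  · by_cases hlam : lam = 0
    · exact Or.inl hlam
    · exact Or.inr (exists_isEigenvalue_networkJacobian hctrb hobsv hlam hL)
  · rintro (rfl | ⟨μ, hJ, hB, rfl⟩)
    · exact hL0
    · exact (of_jacobian μ hJ hB).2

/-- Rank-one coupling `D = v·wᵀ` with Kalman rank conditions: the Laplacian spectrum is
recovered from the spectrum of `J = Iₙ ⊗ B − L ⊗ D` via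
`σ(L) = {0} ∪ {1 / (wᵀ(B − μI)⁻¹v) : μ ∈ σ(J) \ σ(B)}`. -/
theorem laplacian_spectrum_from_jacobian_rank_one (p n : ℕ) (hp : 1 ≤ p) (hn : 1 ≤ n)
    (B : Matrix (Fin p) (Fin p) ℂ) (v w : Fin p → ℂ)
    (hctrb : (Matrix.of fun i j : Fin p => ((B ^ (j : ℕ)).mulVec v) i).rank = p)
    (hobsv : (Matrix.of fun i j : Fin p => ((Bᵀ ^ (j : ℕ)).mulVec w) i).rank = p)
    (L : Matrix (Fin n) (Fin n) ℂ) (hL0 : L.IsEigenvalue 0) :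
    (∀ μ : ℂ,
        ((1 : Matrix (Fin n) (Fin n) ℂ) ⊗ₖ B - L ⊗ₖ Matrix.vecMulVec v w).IsEigenvalue μ →
        ¬ B.IsEigenvalue μ →
        w ⬝ᵥ (B - μ • (1 : Matrix (Fin p) (Fin p) ℂ))⁻¹.mulVec v ≠ 0) ∧
      {lam : ℂ | L.IsEigenvalue lam} =
        {0} ∪ {x : ℂ | ∃ μ : ℂ,
          ((1 : Matrix (Fin n) (Fin n) ℂ) ⊗ₖ B - L ⊗ₖ Matrix.vecMulVec v w).IsEigenvalue μ ∧
          ¬ B.IsEigenvalue μ ∧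
          x = 1 / (w ⬝ᵥ (B - μ • (1 : Matrix (Fin p) (Fin p) ℂ))⁻¹.mulVec v)} :=
  laplacian_spectrum_from_jacobian_rank_one_general p n hp B v w hctrb hobsv L hL0
end

section
/- Let m ≥ 1, let c₁, …, c_m > 0 be real, let 𝔹 ∈ ℂ^{m×m}, and let λ ∈ ℂ. For s ∈ ℝ define the diagonal matrix E_λ(s) = diag(e^{λs/c₁}, …, e^{λs/c_m}). Let u : [0,1] → ℂ^{m}. Then the following are equivalent: (i) every component u_j is differentiable on [0,1] with c_j·u_j′(s) = λ·u_j(s) for all s ∈ [0,1] and j, and u(1) = 𝔹·u(0); (ii) there exists d ∈ ℂ^{m} with E_λ(−1)·𝔹·d = d and u(s) = E_λ(s)·d for all s ∈ [0,1]. In particular, a nonzero such u exists if and only if 1 is an eigenvalue of E_λ(−1)·𝔹, and then the eigenfunctions u are exactly the functions s ↦ E_λ(s)·d with d an eigenvector of E_λ(−1)·𝔹 for the eigenvalue 1. -/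
open Matrix Set

/-- The diagonal matrix `E_λ(s) = diag(e^{λs/c₁}, …, e^{λs/c_m})`. -/
noncomputable def Elam {m : ℕ} (c : Fin m → ℝ) (lam : ℂ) (s : ℝ) :
    Matrix (Fin m) (Fin m) ℂ :=
  Matrix.diagonal fun j => Complex.exp (lam * s / (c j))

/-- Condition (i): every component of `u` is differentiable on `[0,1]` with
`c_j·u_j′(s) = λ·u_j(s)`, and `u(1) = 𝔹·u(0)`. -/
def TransportEigCond {m : ℕ} (c : Fin m → ℝ) (𝔹 : Matrix (Fin m) (Fin m) ℂ) (lam : ℂ)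
    (u : ℝ → Fin m → ℂ) : Prop :=
  (∀ s ∈ Icc (0 : ℝ) 1, ∀ j : Fin m, ∃ d : ℂ,
      HasDerivWithinAt (fun t => u t j) d (Icc (0 : ℝ) 1) s ∧ (c j : ℂ) * d = lam * u s j) ∧
    u 1 = 𝔹.mulVec (u 0)

/-! On each edge the equation `c_j u_j' = λ u_j` is a scalar linear ODE, so `u(s) = E_λ(s) u(0)`.
The boundary condition `u(1) = 𝔹 u(0)` then reads `E_λ(1) d = 𝔹 d` for `d = u(0)`, which is
`E_λ(-1) 𝔹 d = d` because `E_λ` is a one-parameter group. Since `u(0) = d`, the solution is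
nonzero exactly when `d` is. -/

theorem hasDerivAt_cexp_mul_ofReal (k : ℂ) (t : ℝ) :
    HasDerivAt (fun t : ℝ => Complex.exp (k * t)) (k * Complex.exp (k * t)) t := by
  have h : HasDerivAt (fun t : ℝ => Complex.exp (k * t)) (Complex.exp (k * t) * (k * 1)) t :=
    ((Complex.ofRealCLM.hasDerivAt (x := t)).const_mul k).cexp
  rwa [mul_one, mul_comm] at h

theorem Convex.eq_exp_mul_of_hasDerivWithinAt_mul_self {s : Set ℝ} (hs : Convex ℝ s) {k : ℂ}
    {f : ℝ → ℂ} (hf : ∀ t ∈ s, HasDerivWithinAt f (k * f t) s t) {t₀ t : ℝ} (ht₀ : t₀ ∈ s)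
    (ht : t ∈ s) : f t = Complex.exp (k * (t - t₀)) * f t₀ := by
  set g : ℝ → ℂ := fun t => Complex.exp (-k * t) * f t
  have hg : ∀ x ∈ s, HasDerivWithinAt g 0 s x := fun x hx => by
    have h : HasDerivWithinAt g (-k * Complex.exp (-k * x) * f x +
        Complex.exp (-k * x) * (k * f x)) s x :=
      (hasDerivAt_cexp_mul_ofReal (-k) x).hasDerivWithinAt.mul (hf x hx)
    convert h using 1
    ring
  have hconst : g t = g t₀ := by
    simpa [sub_eq_zero] using hs.norm_image_sub_le_of_norm_hasDerivWithin_le (C := 0) hg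
      (fun _ _ => norm_zero.le) ht₀ ht
  calc f t = Complex.exp (k * t) * g t := by
        rw [← mul_assoc, ← Complex.exp_add, neg_mul, add_neg_cancel, Complex.exp_zero, one_mul]
    _ = Complex.exp (k * (t - t₀)) * f t₀ := by
        rw [hconst, ← mul_assoc, ← Complex.exp_add]
        ring_nf

section Elam

variable {m : ℕ} (c : Fin m → ℝ) (lam : ℂ)

theorem Elam_mulVec_apply (s : ℝ) (d : Fin m → ℂ) (j : Fin m) :
    (Elam c lam s).mulVec d j = Complex.exp (lam / c j * s) * d j := by
  rw [Elam, mulVec_diagonal, div_mul_eq_mul_div]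

theorem Elam_mul (s t : ℝ) : Elam c lam s * Elam c lam t = Elam c lam (s + t) := by
  simp only [Elam, diagonal_mul_diagonal, ← Complex.exp_add, Complex.ofReal_add, add_div, mul_add]

@[simp]
theorem Elam_zero : Elam c lam 0 = 1 := by
  simp [Elam]

theorem Elam_neg_one_mul_mulVec_eq_self_iff (𝔹 : Matrix (Fin m) (Fin m) ℂ) (d : Fin m → ℂ) :
    (Elam c lam (-1) * 𝔹).mulVec d = d ↔ 𝔹.mulVec d = (Elam c lam 1).mulVec d := by
  have hinv : Elam c lam 1 * Elam c lam (-1) = 1 := by rw [Elam_mul]; norm_num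
  have hinv' : Elam c lam (-1) * Elam c lam 1 = 1 := by rw [Elam_mul]; norm_num
  constructor
  · intro h
    conv_rhs => rw [← h]
    rw [mulVec_mulVec, ← mul_assoc, hinv, one_mul]
  · intro h
    rw [← mulVec_mulVec, h, mulVec_mulVec, hinv', one_mulVec]

end Elam

section TransportEigCond

variable {m : ℕ} {c : Fin m → ℝ} {𝔹 : Matrix (Fin m) (Fin m) ℂ} {lam : ℂ} {u : ℝ → Fin m → ℂ}

theorem TransportEigCond.eq_Elam_mulVec (hc : ∀ j, c j ≠ 0) (hu : TransportEigCond c 𝔹 lam u)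
    {s : ℝ} (hs : s ∈ Icc (0 : ℝ) 1) : u s = (Elam c lam s).mulVec (u 0) := by
  funext j
  have hode : ∀ t ∈ Icc (0 : ℝ) 1,
      HasDerivWithinAt (fun t => u t j) (lam / c j * u t j) (Icc (0 : ℝ) 1) t := by
    intro t ht
    obtain ⟨d, hd, hcd⟩ := hu.1 t ht j
    have hc' : (c j : ℂ) ≠ 0 := Complex.ofReal_ne_zero.2 (hc j)
    rwa [show d = lam / c j * u t j by field_simp; linear_combination hcd] at hd
  rw [Elam_mulVec_apply, (convex_Icc 0 1).eq_exp_mul_of_hasDerivWithinAt_mul_self hode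
    (left_mem_Icc.2 zero_le_one) hs, Complex.ofReal_zero, sub_zero]

theorem transportEigCond_of_eq_Elam_mulVec (hc : ∀ j, c j ≠ 0) {d : Fin m → ℂ}
    (hd : (Elam c lam (-1) * 𝔹).mulVec d = d)
    (hu : ∀ s ∈ Icc (0 : ℝ) 1, u s = (Elam c lam s).mulVec d) : TransportEigCond c 𝔹 lam u := by
  have hu_apply : ∀ t ∈ Icc (0 : ℝ) 1, ∀ j, u t j = Complex.exp (lam / c j * t) * d j :=
    fun t ht j => by rw [hu t ht, Elam_mulVec_apply]
  refine ⟨fun s hs j => ⟨lam / c j * u s j, ?_, ?_⟩, ?_⟩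
  · rw [hu_apply s hs j, ← mul_assoc]
    exact ((hasDerivAt_cexp_mul_ofReal _ s).mul_const (d j)).hasDerivWithinAt.congr
      (fun t ht => hu_apply t ht j) (hu_apply s hs j)
  · rw [← mul_assoc, mul_div_cancel₀ lam (Complex.ofReal_ne_zero.2 (hc j))]
  · rw [hu 1 (right_mem_Icc.2 zero_le_one), hu 0 (left_mem_Icc.2 zero_le_one), Elam_zero,
      one_mulVec, ((Elam_neg_one_mul_mulVec_eq_self_iff c lam 𝔹 d).1 hd).symm]

theorem transportEigCond_iff (hc : ∀ j, c j ≠ 0) :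
    TransportEigCond c 𝔹 lam u ↔ ∃ d : Fin m → ℂ, (Elam c lam (-1) * 𝔹).mulVec d = d ∧
      ∀ s ∈ Icc (0 : ℝ) 1, u s = (Elam c lam s).mulVec d := by
  refine ⟨fun hu => ⟨u 0, ?_, fun s hs => hu.eq_Elam_mulVec hc hs⟩,
    fun ⟨d, hd, hu⟩ => transportEigCond_of_eq_Elam_mulVec hc hd hu⟩
  rw [Elam_neg_one_mul_mulVec_eq_self_iff, ← hu.2,
    ← hu.eq_Elam_mulVec hc (right_mem_Icc.2 zero_le_one)]

end TransportEigCond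

theorem exists_ne_zero_iff_of_eq_Elam_mulVec {m : ℕ} {c : Fin m → ℝ} {lam : ℂ}
    {u : ℝ → Fin m → ℂ} {d : Fin m → ℂ}
    (hu : ∀ s ∈ Icc (0 : ℝ) 1, u s = (Elam c lam s).mulVec d) :
    (∃ s ∈ Icc (0 : ℝ) 1, u s ≠ 0) ↔ d ≠ 0 := by
  refine ⟨fun ⟨s, hs, hus⟩ hd => hus (by rw [hu s hs, hd, mulVec_zero]), fun hd => ?_⟩
  refine ⟨0, left_mem_Icc.2 zero_le_one, ?_⟩
  rwa [hu 0 (left_mem_Icc.2 zero_le_one), Elam_zero, one_mulVec]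

theorem transport_operator_eigenfunctions_general (m : ℕ)
    (c : Fin m → ℝ) (hc : ∀ j, 0 < c j)
    (𝔹 : Matrix (Fin m) (Fin m) ℂ) (lam : ℂ) (u : ℝ → Fin m → ℂ) :
    (TransportEigCond c 𝔹 lam u ↔
        ∃ d : Fin m → ℂ, (Elam c lam (-1) * 𝔹).mulVec d = d ∧
          ∀ s ∈ Icc (0 : ℝ) 1, u s = (Elam c lam s).mulVec d) ∧
      ((∃ u₂ : ℝ → Fin m → ℂ, TransportEigCond c 𝔹 lam u₂ ∧
          ∃ s ∈ Icc (0 : ℝ) 1, u₂ s ≠ 0) ↔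
        ∃ d : Fin m → ℂ, d ≠ 0 ∧ (Elam c lam (-1) * 𝔹).mulVec d = d) ∧
      ((TransportEigCond c 𝔹 lam u ∧ ∃ s ∈ Icc (0 : ℝ) 1, u s ≠ 0) ↔
        ∃ d : Fin m → ℂ, d ≠ 0 ∧ (Elam c lam (-1) * 𝔹).mulVec d = d ∧
          ∀ s ∈ Icc (0 : ℝ) 1, u s = (Elam c lam s).mulVec d) := by
  have hc' : ∀ j, c j ≠ 0 := fun j => (hc j).ne'
  refine ⟨transportEigCond_iff hc', ⟨?_, ?_⟩, ⟨?_, ?_⟩⟩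
  · rintro ⟨v, hv, hv_ne⟩
    obtain ⟨d, hd, hvd⟩ := (transportEigCond_iff hc').1 hv
    exact ⟨d, (exists_ne_zero_iff_of_eq_Elam_mulVec hvd).1 hv_ne, hd⟩
  · rintro ⟨d, hd_ne, hd⟩
    exact ⟨fun s => (Elam c lam s).mulVec d,
      transportEigCond_of_eq_Elam_mulVec hc' hd fun _ _ => rfl,
      (exists_ne_zero_iff_of_eq_Elam_mulVec fun _ _ => rfl).2 hd_ne⟩
  · rintro ⟨hu, hu_ne⟩
    obtain ⟨d, hd, hud⟩ := (transportEigCond_iff hc').1 hu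
    exact ⟨d, (exists_ne_zero_iff_of_eq_Elam_mulVec hud).1 hu_ne, hd, hud⟩
  · rintro ⟨d, hd_ne, hd, hud⟩
    exact ⟨transportEigCond_of_eq_Elam_mulVec hc' hd hud,
      (exists_ne_zero_iff_of_eq_Elam_mulVec hud).2 hd_ne⟩

/-- Eigenfunction characterisation for the transport operator on a metric graph:
`u` solves `c_j u_j′ = λ u_j` on `[0,1]` with `u(1) = 𝔹 u(0)` iff `u(s) = E_λ(s)d` for some
fixed vector `d` with `E_λ(−1)𝔹d = d`; a nonzero such `u` exists iff `1` is an eigenvalue of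
`E_λ(−1)𝔹`, and then the eigenfunctions are exactly `s ↦ E_λ(s)d` with `d` an eigenvector of
`E_λ(−1)𝔹` for the eigenvalue `1`. -/
theorem transport_operator_eigenfunctions (m : ℕ) (hm : 1 ≤ m)
    (c : Fin m → ℝ) (hc : ∀ j, 0 < c j)
    (𝔹 : Matrix (Fin m) (Fin m) ℂ) (lam : ℂ) (u : ℝ → Fin m → ℂ) :
    (TransportEigCond c 𝔹 lam u ↔
        ∃ d : Fin m → ℂ, (Elam c lam (-1) * 𝔹).mulVec d = d ∧
          ∀ s ∈ Icc (0 : ℝ) 1, u s = (Elam c lam s).mulVec d) ∧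
      ((∃ u₂ : ℝ → Fin m → ℂ, TransportEigCond c 𝔹 lam u₂ ∧
          ∃ s ∈ Icc (0 : ℝ) 1, u₂ s ≠ 0) ↔
        ∃ d : Fin m → ℂ, d ≠ 0 ∧ (Elam c lam (-1) * 𝔹).mulVec d = d) ∧
      ((TransportEigCond c 𝔹 lam u ∧ ∃ s ∈ Icc (0 : ℝ) 1, u s ≠ 0) ↔
        ∃ d : Fin m → ℂ, d ≠ 0 ∧ (Elam c lam (-1) * 𝔹).mulVec d = d ∧
          ∀ s ∈ Icc (0 : ℝ) 1, u s = (Elam c lam s).mulVec d) :=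
  transport_operator_eigenfunctions_general m c hc 𝔹 lam u
end

section
/- Let G be a finite simple graph on vertex set V in which every vertex has positive degree, let X : V → ℂ, and let λ > 0 be a real number with sin(√λ) ≠ 0. For each ordered pair of adjacent vertices (v, w) define u_{vw} : [0,1] → ℂ by u_{vw}(s) = (X(v)·sin(√λ·(1−s)) + X(w)·sin(√λ·s)) / sin(√λ). Then: (a) each u_{vw} satisfies −u_{vw}″(s) = λ·u_{vw}(s) on [0,1] with u_{vw}(0) = X(v) and u_{vw}(1) = X(w); and (b) the Kirchhoff conditions Σ_{w ∈ N(v)} u_{vw}′(0) = 0 hold for every vertex v ∈ V if and only if Σ_{w ∈ N(v)} X(w) = cos(√λ)·deg(v)·X(v) for every v ∈ V, i.e., if and only if X satisfies the transition-matrix eigenvalue equation 𝒟^{−1}𝒜 X = cos(√λ)·X, where 𝒜 is the adjacency matrix and 𝒟 the degree matrix of G. -/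
/-!
Both `s ↦ sin(√λ(1−s))` and `s ↦ sin(√λ s)` solve `−u″ = λu`, hence so does every `u_{vw}`.
Differentiating at `s = 0` gives `u_{vw}′(0) = √λ (X(w) − cos(√λ) X(v)) / sin(√λ)`, so the
Kirchhoff sum at `v` is the nonzero multiple `√λ / sin(√λ)` of
`Σ_{w ∈ N(v)} X(w) − cos(√λ) deg(v) X(v)`; dividing by `deg(v)` gives the transition-matrix form.
-/

open Matrix Set

/-- The edge function `u_{vw}(s) = (X(v)·sin(√λ(1−s)) + X(w)·sin(√λ s)) / sin(√λ)`. -/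
noncomputable def edgeFun {V : Type*} (X : V → ℂ) (lam : ℝ) (v w : V) (s : ℝ) : ℂ :=
  (X v * (Real.sin (Real.sqrt lam * (1 - s)) : ℂ) +
      X w * (Real.sin (Real.sqrt lam * s) : ℂ)) / (Real.sin (Real.sqrt lam) : ℂ)

theorem SimpleGraph.inv_degMatrix_mul_adjMatrix_mulVec_eq_smul_iff {V K : Type*} [Fintype V]
    [DecidableEq V] [Field K] [CharZero K] (G : SimpleGraph V) [DecidableRel G.Adj]
    (hdeg : ∀ v, 0 < G.degree v) (X : V → K) (c : K) :
    ((G.degMatrix K)⁻¹ * G.adjMatrix K) *ᵥ X = c • X ↔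
      ∀ v, ∑ w ∈ G.neighborFinset v, X w = c * G.degree v * X v := by
  have hdeg₀ (v : V) : (G.degree v : K) ≠ 0 := Nat.cast_ne_zero.2 (hdeg v).ne'
  have hinv : (G.degMatrix K)⁻¹ = diagonal fun v => (G.degree v : K)⁻¹ := by
    refine inv_eq_left_inv ?_
    rw [degMatrix, diagonal_mul_diagonal, ← diagonal_one]
    exact congrArg diagonal (funext fun v => inv_mul_cancel₀ (hdeg₀ v))
  rw [hinv, ← mulVec_mulVec, funext_iff]
  refine forall_congr' fun v => ?_
  rw [mulVec_diagonal, adjMatrix_mulVec_apply, Pi.smul_apply, smul_eq_mul,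
    inv_mul_eq_iff_eq_mul₀ (hdeg₀ v), mul_left_comm, ← mul_assoc]

theorem Real.hasDerivAt_sin_mul_one_sub (a s : ℝ) :
    HasDerivAt (fun t => Real.sin (a * (1 - t))) (-a * Real.cos (a * (1 - s))) s := by
  simpa [mul_comm] using (((hasDerivAt_id s).const_sub 1).const_mul a).sin

theorem Real.hasDerivAt_cos_mul_one_sub (a s : ℝ) :
    HasDerivAt (fun t => Real.cos (a * (1 - t))) (a * Real.sin (a * (1 - s))) s := by
  simpa [mul_comm] using (((hasDerivAt_id s).const_sub 1).const_mul a).cos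

theorem Real.hasDerivAt_sin_mul (a s : ℝ) :
    HasDerivAt (fun t => Real.sin (a * t)) (a * Real.cos (a * s)) s := by
  simpa [mul_comm] using ((hasDerivAt_id s).const_mul a).sin

theorem Real.hasDerivAt_cos_mul (a s : ℝ) :
    HasDerivAt (fun t => Real.cos (a * t)) (-a * Real.sin (a * s)) s := by
  simpa [mul_comm] using ((hasDerivAt_id s).const_mul a).cos

section EdgeFunction

variable {V : Type*} (X : V → ℂ) (lam : ℝ) (v w : V)

theorem hasDerivAt_edgeFun (s : ℝ) :
    HasDerivAt (edgeFun X lam v w)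
      ((X v * (-√lam * Real.cos (√lam * (1 - s)) : ℝ) +
        X w * (√lam * Real.cos (√lam * s) : ℝ)) / (Real.sin √lam : ℂ)) s :=
  (((Real.hasDerivAt_sin_mul_one_sub _ s).ofReal_comp.const_mul (X v)).add
    ((Real.hasDerivAt_sin_mul _ s).ofReal_comp.const_mul (X w))).div_const _

theorem deriv_edgeFun :
    deriv (edgeFun X lam v w) = fun s =>
      (X v * (-√lam * Real.cos (√lam * (1 - s)) : ℝ) +
        X w * (√lam * Real.cos (√lam * s) : ℝ)) / (Real.sin √lam : ℂ) :=
  funext fun s => (hasDerivAt_edgeFun X lam v w s).deriv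

theorem deriv_deriv_edgeFun (hlam : 0 ≤ lam) (s : ℝ) :
    deriv (deriv (edgeFun X lam v w)) s = -lam * edgeFun X lam v w s := by
  have hderiv₂ :=
    ((((Real.hasDerivAt_cos_mul_one_sub √lam s).const_mul (-√lam)).ofReal_comp.const_mul (X v)).add
      (((Real.hasDerivAt_cos_mul √lam s).const_mul √lam).ofReal_comp.const_mul (X w))).div_const
        (Real.sin √lam : ℂ)
  rw [deriv_edgeFun]
  refine hderiv₂.deriv.trans ?_
  have hsq : (√lam : ℂ) ^ 2 = lam := by exact_mod_cast Real.sq_sqrt hlam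
  rw [edgeFun, ← hsq]
  push_cast
  ring

theorem edgeFun_zero (hsin : Real.sin √lam ≠ 0) : edgeFun X lam v w 0 = X v := by
  simp only [edgeFun, sub_zero, mul_one, mul_zero, Real.sin_zero, Complex.ofReal_zero, add_zero]
  exact mul_div_cancel_right₀ _ (Complex.ofReal_ne_zero.2 hsin)

theorem edgeFun_one (hsin : Real.sin √lam ≠ 0) : edgeFun X lam v w 1 = X w := by
  simp only [edgeFun, sub_self, mul_one, mul_zero, Real.sin_zero, Complex.ofReal_zero, zero_add]
  exact mul_div_cancel_right₀ _ (Complex.ofReal_ne_zero.2 hsin)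

theorem deriv_edgeFun_zero :
    deriv (edgeFun X lam v w) 0 = √lam / Real.sin √lam * (X w - Real.cos √lam * X v) := by
  rw [deriv_edgeFun]
  push_cast
  simp only [sub_zero, mul_zero, Complex.cos_zero, mul_one]
  ring

theorem sum_deriv_edgeFun_zero_eq_zero_iff (hsin : Real.sin √lam ≠ 0) (N : Finset V) :
    ∑ w ∈ N, deriv (edgeFun X lam v w) 0 = 0 ↔
      ∑ w ∈ N, X w = Real.cos √lam * N.card * X v := by
  have hsqrt : √lam ≠ 0 := fun h => hsin (by rw [h, Real.sin_zero])
  have hfactor : (√lam / Real.sin √lam : ℂ) ≠ 0 := by exact_mod_cast div_ne_zero hsqrt hsin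
  simp only [deriv_edgeFun_zero, ← Finset.mul_sum, mul_eq_zero, hfactor, false_or,
    Finset.sum_sub_distrib, Finset.sum_const, nsmul_eq_mul, sub_eq_zero]
  ring_nf

end EdgeFunction

theorem metric_graph_laplacian_eigenfunction_general {V : Type*} [Fintype V] [DecidableEq V]
    (G : SimpleGraph V) [DecidableRel G.Adj] (hdeg : ∀ v : V, 0 < G.degree v)
    (X : V → ℂ) (lam : ℝ) (hsin : Real.sin (Real.sqrt lam) ≠ 0) :
    (∀ v w : V, G.Adj v w →
        (∀ s ∈ Icc (0 : ℝ) 1,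
          -(deriv (deriv (edgeFun X lam v w)) s) = (lam : ℂ) * edgeFun X lam v w s) ∧
        edgeFun X lam v w 0 = X v ∧ edgeFun X lam v w 1 = X w) ∧
      ((∀ v : V, ∑ w ∈ G.neighborFinset v, deriv (edgeFun X lam v w) 0 = 0) ↔
        ∀ v : V, ∑ w ∈ G.neighborFinset v, X w =
          (Real.cos (Real.sqrt lam) : ℂ) * (G.degree v : ℂ) * X v) ∧
      ((∀ v : V, ∑ w ∈ G.neighborFinset v, deriv (edgeFun X lam v w) 0 = 0) ↔
        ((Matrix.diagonal fun v : V => (G.degree v : ℂ))⁻¹ * G.adjMatrix ℂ).mulVec X =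
          (Real.cos (Real.sqrt lam) : ℂ) • X) := by
  have hlam : 0 ≤ lam := by
    by_contra! h
    exact hsin (by rw [Real.sqrt_eq_zero_of_nonpos h.le, Real.sin_zero])
  have hkirchhoff (v : V) := G.card_neighborFinset_eq_degree v ▸
    sum_deriv_edgeFun_zero_eq_zero_iff X lam v hsin (G.neighborFinset v)
  refine ⟨fun v w _ => ⟨fun s _ => ?_, edgeFun_zero X lam v w hsin, edgeFun_one X lam v w hsin⟩,
    forall_congr' hkirchhoff, ?_⟩
  · rw [deriv_deriv_edgeFun X lam v w hlam, neg_mul, neg_neg]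
  · rw [forall_congr' hkirchhoff]
    exact (G.inv_degMatrix_mul_adjMatrix_mulVec_eq_smul_iff hdeg X _).symm

/-- On an equilateral metric graph, the functions `u_{vw}` solve `−u″ = λu` on `[0,1]`
with boundary values `X(v)`, `X(w)`, and the Kirchhoff conditions at every vertex hold iff
the vertex values `X` satisfy the transition-matrix eigenvalue equation
`𝒟⁻¹𝒜 X = cos(√λ)·X`. -/
theorem metric_graph_laplacian_eigenfunction {V : Type*} [Fintype V] [DecidableEq V]
    (G : SimpleGraph V) [DecidableRel G.Adj] (hdeg : ∀ v : V, 0 < G.degree v)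
    (X : V → ℂ) (lam : ℝ) (hlam : 0 < lam) (hsin : Real.sin (Real.sqrt lam) ≠ 0) :
    (∀ v w : V, G.Adj v w →
        (∀ s ∈ Icc (0 : ℝ) 1,
          -(deriv (deriv (edgeFun X lam v w)) s) = (lam : ℂ) * edgeFun X lam v w s) ∧
        edgeFun X lam v w 0 = X v ∧ edgeFun X lam v w 1 = X w) ∧
      ((∀ v : V, ∑ w ∈ G.neighborFinset v, deriv (edgeFun X lam v w) 0 = 0) ↔
        ∀ v : V, ∑ w ∈ G.neighborFinset v, X w =
          (Real.cos (Real.sqrt lam) : ℂ) * (G.degree v : ℂ) * X v) ∧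
      ((∀ v : V, ∑ w ∈ G.neighborFinset v, deriv (edgeFun X lam v w) 0 = 0) ↔
        ((Matrix.diagonal fun v : V => (G.degree v : ℂ))⁻¹ * G.adjMatrix ℂ).mulVec X =
          (Real.cos (Real.sqrt lam) : ℂ) • X) :=
  metric_graph_laplacian_eigenfunction_general G hdeg X lam hsin
end

section
/- Let n ≥ 1, let a ∈ ℝ^{n×n} be symmetric with nonnegative entries and total weight m₂ := Σ_{i,j} a_{ij} > 0, and set Wᵢ := Σ_{j} a_{ij}. Let ∼ be an equivalence relation on {1, …, n} (a partition into communities) and let δ(i,j) = 1 if i ∼ j and δ(i,j) = 0 otherwise. Then the modularity Q := (1/m₂) Σ_{i,j} ( a_{ij} − WᵢWⱼ/m₂ ) δ(i,j) satisfies −1 ≤ Q ≤ 1. -/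
/-!
Write `Q = (A - B / m) / m`, where `A = ∑ a i j δ i j` is the weight inside communities and
`B = ∑ W i W j δ i j`. Both are sums of nonnegative terms dominated by the corresponding full
sums, `m` and `(∑ W i)² = m²`, so `A / m` and `B / m²` lie in `[0, 1]` and their difference in
`[-1, 1]`.
-/

open Matrix Finset

section
variable {ι : Type*} [Fintype ι]

theorem sum_sum_mul_ite_mem_Icc {f : ι → ι → ℝ} (hf : ∀ i j, 0 ≤ f i j)
    (p : ι → ι → Prop) [DecidableRel p] :
    ∑ i, ∑ j, f i j * (if p i j then (1 : ℝ) else 0) ∈ Set.Icc 0 (∑ i, ∑ j, f i j) := by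
  refine ⟨sum_nonneg fun i _ => sum_nonneg fun j _ => ?_,
    sum_le_sum fun i _ => sum_le_sum fun j _ => ?_⟩ <;> split_ifs <;> simp [hf]

theorem sum_sum_sub_div_mul_ite (a : ι → ι → ℝ) (w : ι → ℝ) (m : ℝ)
    (p : ι → ι → Prop) [DecidableRel p] :
    ∑ i, ∑ j, (a i j - w i * w j / m) * (if p i j then (1 : ℝ) else 0) =
      ∑ i, ∑ j, a i j * (if p i j then (1 : ℝ) else 0) -
        (∑ i, ∑ j, w i * w j * (if p i j then (1 : ℝ) else 0)) / m := by
  simp only [sub_mul, sum_sub_distrib, sum_div, div_mul_eq_mul_div]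

end

theorem one_div_mul_sub_div_mem_Icc {A B m : ℝ} (hm : 0 < m) (hA : A ∈ Set.Icc 0 m)
    (hB : B ∈ Set.Icc 0 (m * m)) : 1 / m * (A - B / m) ∈ Set.Icc (-1) 1 := by
  obtain ⟨hA₀, hAm⟩ := hA
  have hB₀ : 0 ≤ B / m := div_nonneg hB.1 hm.le
  have hBm : B / m ≤ m := by rw [div_le_iff₀ hm]; exact hB.2
  rw [one_div_mul_eq_div, Set.mem_Icc, le_div_iff₀ hm, div_le_one hm]
  constructor <;> linarith

theorem modularity_bounds_general (n : ℕ)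
    (a : Matrix (Fin n) (Fin n) ℝ)
    (hpos : ∀ i j, 0 ≤ a i j)
    (hm : 0 < ∑ i, ∑ j, a i j)
    (r : Fin n → Fin n → Prop) [DecidableRel r] :
    -1 ≤ (1 / (∑ i, ∑ j, a i j)) *
        ∑ i, ∑ j, (a i j - (∑ k, a i k) * (∑ k, a j k) / (∑ i', ∑ j', a i' j')) *
          (if r i j then (1 : ℝ) else 0) ∧
      (1 / (∑ i, ∑ j, a i j)) *
        ∑ i, ∑ j, (a i j - (∑ k, a i k) * (∑ k, a j k) / (∑ i', ∑ j', a i' j')) *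
          (if r i j then (1 : ℝ) else 0) ≤ 1 := by
  have hW : ∀ i, 0 ≤ ∑ k, a i k := fun i => sum_nonneg fun k _ => hpos i k
  rw [sum_sum_sub_div_mul_ite a (fun i => ∑ k, a i k)]
  refine one_div_mul_sub_div_mem_Icc hm (sum_sum_mul_ite_mem_Icc hpos r) ?_
  simpa only [← sum_mul_sum] using
    sum_sum_mul_ite_mem_Icc (fun i j => mul_nonneg (hW i) (hW j)) r

/-- Modularity of a partition of a weighted undirected network lies in `[−1, 1]`. -/
theorem modularity_bounds (n : ℕ) (hn : 1 ≤ n)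
    (a : Matrix (Fin n) (Fin n) ℝ)
    (hsymm : ∀ i j, a i j = a j i)
    (hpos : ∀ i j, 0 ≤ a i j)
    (hm : 0 < ∑ i, ∑ j, a i j)
    (r : Fin n → Fin n → Prop) [DecidableRel r] (hr : Equivalence r) :
    -1 ≤ (1 / (∑ i, ∑ j, a i j)) *
        ∑ i, ∑ j, (a i j - (∑ k, a i k) * (∑ k, a j k) / (∑ i', ∑ j', a i' j')) *
          (if r i j then (1 : ℝ) else 0) ∧
      (1 / (∑ i, ∑ j, a i j)) *
        ∑ i, ∑ j, (a i j - (∑ k, a i k) * (∑ k, a j k) / (∑ i', ∑ j', a i' j')) *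
          (if r i j then (1 : ℝ) else 0) ≤ 1 :=
  modularity_bounds_general n a hpos hm r
end
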